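/- Consider two d-layer networks xⁱ = φ((Wⁱ)ᵀ xⁱ⁻¹) and x̂ⁱ = φ((Ŵⁱ)ᵀ x̂ⁱ⁻¹), with φ 1-Lipschitz entrywise and φ(0)=0, sharing inputs up to error ‖x⁰ - x̂⁰‖_∞ ≤ ε⁰. If ‖Wⁱ‖_{1,∞} ≤ 1, ‖xⁱ⁻¹ + (x̂ⁱ⁻¹ - xⁱ⁻¹)‖_∞ ≤ B, and ‖Wⁱ - Ŵⁱ‖_{1,∞} ≤ (εⁱ - εⁱ⁻¹)/B for an increasing sequence ε⁰ < ε¹ < ⋯ < ε^d, then ‖xⁱ - x̂ⁱ‖_∞ ≤ εⁱ for all i. -/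
import Mathlib


noncomputable def linf {n : ℕ} (v : Fin n → ℝ) : ℝ := ⨆ i, |v i|
noncomputable def m1inf {n₁ n₂ : ℕ} (W : Matrix (Fin n₁) (Fin n₂) ℝ) : ℝ :=
  ⨆ j, ∑ i, |W i j|

lemma linf_nonneg {n : ℕ} (v : Fin n → ℝ) : 0 ≤ linf v :=
  Real.iSup_nonneg fun i => abs_nonneg _

lemma le_linf {n : ℕ} (v : Fin n → ℝ) (j : Fin n) : |v j| ≤ linf v := by
  exact le_ciSup (Set.Finite.bddAbove (Set.finite_range (fun i => |v i|))) j

lemma le_m1inf {n₁ n₂ : ℕ} (W : Matrix (Fin n₁) (Fin n₂) ℝ) (j : Fin n₂) :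
    ∑ i, |W i j| ≤ m1inf W := by
  exact le_ciSup (Set.Finite.bddAbove (Set.finite_range (fun j => ∑ i, |W i j|))) j

theorem stmt19 (d : ℕ) (dims : ℕ → ℕ) (φ : ℝ → ℝ)
    (hφ : LipschitzWith 1 φ) (hφ0 : φ 0 = 0) (B : ℝ) (hB : 0 < B)
    (W V : (i : ℕ) → Matrix (Fin (dims i)) (Fin (dims (i + 1))) ℝ)
    (x v : (i : ℕ) → Fin (dims i) → ℝ)
    (hrec : ∀ i < d, ∀ j, x (i + 1) j = φ (∑ k, W i k j * x i k))
    (hrec' : ∀ i < d, ∀ j, v (i + 1) j = φ (∑ k, V i k j * v i k))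
    (eps : ℕ → ℝ) (hmono : ∀ i < d, eps i < eps (i + 1))
    (hx0 : linf (x 0 - v 0) ≤ eps 0)
    (hW : ∀ i < d, m1inf (W i) ≤ 1)
    (hv : ∀ i < d, linf (fun k => x i k + (v i k - x i k)) ≤ B)
    (hWV : ∀ i < d, m1inf (W i - V i) ≤ (eps (i + 1) - eps i) / B) :
    ∀ i ≤ d, linf (x i - v i) ≤ eps i := by
  intro i hi
  induction i with
  | zero => exact hx0
  | succ n ih =>
    have hn : n < d := Nat.lt_of_succ_le hi
    have ihn : linf (x n - v n) ≤ eps n := ih hn.le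
    have hepsn : 0 ≤ eps n := le_trans (linf_nonneg _) ihn
    have hvn : linf (v n) ≤ B := by
      have := hv n hn
      simpa using this
    have hvnn : 0 ≤ linf (v n) := linf_nonneg _
    apply Real.iSup_le _ (le_trans hepsn (hmono n hn).le)
    intro j
    have hj : (x (n+1) - v (n+1)) j = φ (∑ k, W n k j * x n k) - φ (∑ k, V n k j * v n k) := by
      simp [hrec n hn j, hrec' n hn j]
    rw [hj]
    have hlip : |φ (∑ k, W n k j * x n k) - φ (∑ k, V n k j * v n k)| ≤
        |(∑ k, W n k j * x n k) - (∑ k, V n k j * v n k)| := by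
      have := hφ.dist_le_mul (∑ k, W n k j * x n k) (∑ k, V n k j * v n k)
      simpa [Real.dist_eq] using this
    refine le_trans hlip ?_
    have hsplit : (∑ k, W n k j * x n k) - (∑ k, V n k j * v n k) =
        (∑ k, W n k j * (x n k - v n k)) + ∑ k, (W n k j - V n k j) * v n k := by
      rw [← Finset.sum_add_distrib, ← Finset.sum_sub_distrib]
      congr 1; ext k; ring
    rw [hsplit]
    have h1 : |∑ k, W n k j * (x n k - v n k)| ≤ (∑ k, |W n k j|) * linf (x n - v n) := by
      refine le_trans (Finset.abs_sum_le_sum_abs _ _) ?_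
      rw [Finset.sum_mul]
      refine Finset.sum_le_sum fun k _ => ?_
      rw [abs_mul]
      exact mul_le_mul_of_nonneg_left (le_linf (x n - v n) k) (abs_nonneg _)
    have h2 : |∑ k, (W n k j - V n k j) * v n k| ≤ (∑ k, |W n k j - V n k j|) * linf (v n) := by
      refine le_trans (Finset.abs_sum_le_sum_abs _ _) ?_
      rw [Finset.sum_mul]
      refine Finset.sum_le_sum fun k _ => ?_
      rw [abs_mul]
      exact mul_le_mul_of_nonneg_left (le_linf (v n) k) (abs_nonneg _)
    have hA : (∑ k, |W n k j|) * linf (x n - v n) ≤ 1 * eps n := by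
      apply mul_le_mul (le_trans (le_m1inf _ j) (hW n hn)) ihn (linf_nonneg _) zero_le_one
    have hB1 : (∑ k, |W n k j - V n k j|) * linf (v n) ≤ ((eps (n+1) - eps n) / B) * B := by
      have hs : ∑ k, |W n k j - V n k j| ≤ (eps (n+1) - eps n) / B := by
        have := le_trans (le_m1inf (W n - V n) j) (hWV n hn)
        simpa using this
      have hsn : 0 ≤ (eps (n+1) - eps n) / B :=
        div_nonneg (by linarith [hmono n hn]) hB.le
      exact mul_le_mul hs hvn hvnn hsn
    have := le_trans (abs_add_le _ _) (add_le_add (le_trans h1 hA) (le_trans h2 hB1))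
    rw [div_mul_cancel₀ _ (ne_of_gt hB)] at this
    linarith
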